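/- arXiv:1102.4292 — 5 statements merged into one kernel-verified Lean document; each statement's English description precedes it below -/
import Mathlib

section
/- Let Γ be a distance-regular graph with valency k such that for some vertex x the complement of the local graph Δ(x) is the line graph of a t-regular graph Σ with t ≥ 2. Then the intersection number c₂ of Γ satisfies c₂ ≥ k − 3t + 3. -/
open SimpleGraph Finset

/-- A distance-regular graph with diameter `D` and intersection numbers `b i`, `c i`. -/
structure SimpleGraph.IsDRG {V : Type*} [Fintype V] [DecidableEq V]
    (G : SimpleGraph V) [DecidableRel G.Adj] (D : ℕ) (b c : ℕ → ℕ) : Prop where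
  connected : G.Connected
  dist_le : ∀ x y : V, G.dist x y ≤ D
  exists_dist : ∃ x y : V, G.dist x y = D
  b_eq : ∀ i ≤ D, ∀ x y : V, G.dist x y = i →
    ((G.neighborFinset y).filter (fun z => G.dist x z = i + 1)).card = b i
  c_eq : ∀ i ≤ D, ∀ x y : V, G.dist x y = i →
    ((G.neighborFinset y).filter (fun z => G.dist x z + 1 = i)).card = c i
  b_last : b D = 0
  c_zero : c 0 = 0

/-- The second largest eigenvalue of the real symmetric matrix `A` is at most `t`:
all eigenvalues except (possibly) one are at most `t`. -/
def Matrix.SecondEigLE {n : Type*} [Fintype n] [DecidableEq n]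
    (A : Matrix n n ℝ) (t : ℝ) : Prop :=
  ∀ hA : A.IsHermitian, ∃ i, ∀ j, j ≠ i → hA.eigenvalues j ≤ t

instance {V : Type*} (G : SimpleGraph V) [DecidableRel G.Adj] (s : Set V) :
    DecidableRel (G.induce s).Adj := fun a b => inferInstanceAs (Decidable (G.Adj a b))

/-- The local graph of `G` at `x`: the subgraph induced on the neighbours of `x`. -/
abbrev SimpleGraph.localGraph {V : Type*} [Fintype V] [DecidableEq V]
    (G : SimpleGraph V) [DecidableRel G.Adj] (x : V) : SimpleGraph (G.neighborSet x) :=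
  G.induce (G.neighborSet x)

/-!
Fix a neighbour `z` of `x` and put `A = Γ(x) ∩ Γ(z)`, `F = Γ(z) \ ({x} ∪ Γ(x))` and
`F' = Γ(x) \ ({z} ∪ Γ(z))`; let `a₁ = k - b₁ - 1 = |A|`. Every `y ∈ F` is at distance 2 from
`x`, and `z` together with `A ∩ Γ(y)` are common neighbours of `x` and `y`, so
`c₂ ≥ 1 + a₁ - |A \ Γ(y)|`.

Since every edge lies in `a₁` triangles, each `w ∈ A` has as many neighbours in `F` as in `F'`;
counting the edges between `A` and `F`, resp. `F'`, gives
`∑_{y ∈ F} |A \ Γ(y)| = ∑_{u ∈ F'} |A \ Γ(u)|`, and `|F| = |F'| = b₁`.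

In `Δ(x) ≅ L(Σ)ᶜ` a vertex `u ∈ F'` is an edge `{a, p}` of `Σ` meeting the edge `z` in `a`,
and a vertex of `A \ Γ(u)` is an edge meeting `u` but not `z`, i.e. another edge through `p`;
hence `|A \ Γ(u)| ≤ t - 1`. So some `y ∈ F` has `|A \ Γ(y)| ≤ t - 1`, and `b₁ = 2t - 2`, the
valency of `L(Σ)`, turns `c₂ ≥ a₁ - t + 2 = k - b₁ - t + 1` into the claim.
-/

namespace SimpleGraph

section Counting

def farNeighborFinset {V : Type*} [Fintype V] [DecidableEq V] (G : SimpleGraph V)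
    [DecidableRel G.Adj] (x z : V) : Finset V :=
  G.neighborFinset z \ insert x (G.neighborFinset x)

variable {V : Type*} [Fintype V] [DecidableEq V] {G : SimpleGraph V} [DecidableRel G.Adj]

lemma sum_card_inter_neighborFinset_comm (s t : Finset V) :
    ∑ a ∈ s, #(t ∩ G.neighborFinset a) = ∑ b ∈ t, #(s ∩ G.neighborFinset b) := by
  have := sum_card_bipartiteAbove_eq_sum_card_bipartiteBelow (s := s) (t := t) (r := G.Adj)
  simp only [bipartiteAbove, bipartiteBelow] at this
  convert this using 3 with a _ b _
  · ext; simp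
  · ext; simp [adj_comm]

lemma card_sdiff_insert_neighborFinset_add {x : V} {s : Finset V} (hx : x ∈ s) :
    #(s \ insert x (G.neighborFinset x)) + #(G.neighborFinset x ∩ s) + 1 = #s := by
  have hins : s ∩ insert x (G.neighborFinset x) = insert x (G.neighborFinset x ∩ s) := by
    rw [inter_insert_of_mem hx, inter_comm]
  have hx' : x ∉ G.neighborFinset x ∩ s := by simp
  rw [← card_sdiff_add_card_inter s (insert x _), hins, card_insert_of_notMem hx', add_assoc]

lemma card_farNeighborFinset_add {x z : V} (hxz : G.Adj x z) :
    #(G.farNeighborFinset x z) + #(G.neighborFinset x ∩ G.neighborFinset z) + 1 = G.degree z := by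
  rw [← card_neighborFinset_eq_degree]
  exact card_sdiff_insert_neighborFinset_add (by simpa using hxz.symm)

lemma card_farNeighborFinset_inter_add {x z w : V} (hxw : G.Adj x w) (hxz : G.Adj x z) :
    #(G.farNeighborFinset x z ∩ G.neighborFinset w)
      + #(G.neighborFinset x ∩ G.neighborFinset z ∩ G.neighborFinset w) + 1
      = #(G.neighborFinset z ∩ G.neighborFinset w) := by
  rw [farNeighborFinset, sdiff_inter_right_comm, inter_assoc]
  exact card_sdiff_insert_neighborFinset_add (by simp [hxz.symm, hxw.symm])

lemma farNeighborFinset_eq_filter_dist {x z : V} (hxz : G.Adj x z) :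
    G.farNeighborFinset x z = {y ∈ G.neighborFinset z | G.dist x y = 2} := by
  ext y
  simp only [farNeighborFinset, mem_sdiff, mem_insert, mem_neighborFinset, mem_filter, not_or]
  refine and_congr_right fun hzy => ⟨fun ⟨hne, hnadj⟩ => ?_, fun h => ⟨?_, ?_⟩⟩
  · let p : G.Walk x y := .cons hxz (.cons hzy .nil)
    have hle : G.dist x y ≤ 2 := dist_le p
    have hlt := p.reachable.one_lt_dist_of_ne_of_not_adj (Ne.symm hne) hnadj
    omega
  · rintro rfl; simp at h
  · intro hxy; rw [dist_eq_one_iff_adj.mpr hxy] at h; omega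

lemma card_inter_neighborFinset_add_one_le {x z y : V} (hxz : G.Adj x z)
    (hy : y ∈ G.farNeighborFinset x z) :
    #(G.neighborFinset x ∩ G.neighborFinset z ∩ G.neighborFinset y) + 1
      ≤ #(G.neighborFinset x ∩ G.neighborFinset y) := by
  have hzy : G.Adj z y := by simpa [farNeighborFinset] using (mem_sdiff.mp hy).1
  rw [← card_insert_of_notMem (s := _ ∩ _) (a := z) (by simp)]
  refine card_le_card (insert_subset ?_ fun w hw => ?_)
  · simp [hxz, hzy.symm]
  · simp only [mem_inter] at hw ⊢
    exact ⟨hw.1.1, hw.2⟩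

lemma card_farNeighborFinset_inter_eq {a : ℕ}
    (ha : ∀ u v, G.Adj u v → #(G.neighborFinset u ∩ G.neighborFinset v) = a)
    {x z w : V} (hxz : G.Adj x z) (hw : w ∈ G.neighborFinset x ∩ G.neighborFinset z) :
    #(G.farNeighborFinset x z ∩ G.neighborFinset w)
      = #(G.farNeighborFinset z x ∩ G.neighborFinset w) := by
  simp only [mem_inter, mem_neighborFinset] at hw
  have hz := card_farNeighborFinset_inter_add hw.1 hxz
  have hx := card_farNeighborFinset_inter_add hw.2 hxz.symm
  rw [ha z w hw.2] at hz
  rw [ha x w hw.1, inter_comm (G.neighborFinset z)] at hx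
  omega

lemma exists_mem_farNeighborFinset_card_sdiff_le {k a m : ℕ} (hk : G.IsRegularOfDegree k)
    (ha : ∀ u v, G.Adj u v → #(G.neighborFinset u ∩ G.neighborFinset v) = a)
    {x z : V} (hxz : G.Adj x z) (hne : (G.farNeighborFinset z x).Nonempty)
    (hm : ∀ u ∈ G.farNeighborFinset z x,
      #((G.neighborFinset x ∩ G.neighborFinset z) \ G.neighborFinset u) ≤ m) :
    ∃ y ∈ G.farNeighborFinset x z,
      #((G.neighborFinset x ∩ G.neighborFinset z) \ G.neighborFinset y) ≤ m := by
  have hcard : #(G.farNeighborFinset x z) = #(G.farNeighborFinset z x) := by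
    have hF := card_farNeighborFinset_add hxz
    have hF' := card_farNeighborFinset_add hxz.symm
    rw [inter_comm, hk x] at hF'
    rw [hk z] at hF
    omega
  set A := G.neighborFinset x ∩ G.neighborFinset z
  set F := G.farNeighborFinset x z
  set F' := G.farNeighborFinset z x
  have hedges :
      ∑ y ∈ F, #(A ∩ G.neighborFinset y) = ∑ u ∈ F', #(A ∩ G.neighborFinset u) := by
    rw [sum_card_inter_neighborFinset_comm, sum_card_inter_neighborFinset_comm F' A]
    exact sum_congr rfl fun w hw => card_farNeighborFinset_inter_eq ha hxz hw
  have hsplit : ∀ s : Finset V,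
      ∑ y ∈ s, (#(A ∩ G.neighborFinset y) + #(A \ G.neighborFinset y)) = #s * #A :=
    fun s => by simp [card_inter_add_card_sdiff]
  have hsum : ∑ y ∈ F, #(A \ G.neighborFinset y) ≤ ∑ _y ∈ F, m := by
    have h := hsplit F
    rw [hcard, ← hsplit F', sum_add_distrib, sum_add_distrib, hedges] at h
    calc ∑ y ∈ F, #(A \ G.neighborFinset y)
      _ = ∑ u ∈ F', #(A \ G.neighborFinset u) := by omega
      _ ≤ ∑ _u ∈ F', m := sum_le_sum hm
      _ = ∑ _y ∈ F, m := by simp [hcard]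
  exact exists_le_of_sum_le (card_pos.mp (hcard ▸ hne.card_pos)) hsum

lemma map_neighborFinset_localGraph (x : V) (a : G.neighborSet x) :
    ((G.localGraph x).neighborFinset a).map (Function.Embedding.subtype _)
      = G.neighborFinset x ∩ G.neighborFinset a := by
  ext w
  simp [and_comm]

lemma map_neighborFinset_compl_localGraph (x : V) (a : G.neighborSet x) :
    ((G.localGraph x)ᶜ.neighborFinset a).map (Function.Embedding.subtype _)
      = G.farNeighborFinset a x := by
  ext w
  simp [farNeighborFinset, Subtype.ext_iff, eq_comm]
  tauto

end Counting

section LineGraph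

variable {W : Type*} [Fintype W] [DecidableEq W] {S : SimpleGraph W} [DecidableRel S.Adj]

instance : DecidableRel S.lineGraph.Adj := fun _ _ =>
  decidable_of_iff _ lineGraph_adj_iff_exists.symm

lemma card_filter_mem_edgeSet (p : W) :
    #{e : S.edgeSet | p ∈ (e : Sym2 W)} = S.degree p := by
  rw [← card_incidenceFinset_eq_degree, ← card_map (Function.Embedding.subtype _)]
  congr 1
  ext e
  simp [incidenceSet, and_comm]

lemma lineGraph_degree_add_two {u v : W} (h : s(u, v) ∈ S.edgeSet) :
    S.lineGraph.degree ⟨s(u, v), h⟩ + 2 = S.degree u + S.degree v := by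
  set e : S.edgeSet := ⟨s(u, v), h⟩
  set I : W → Finset S.edgeSet := fun p => {f | p ∈ (f : Sym2 W)}
  have hN : S.lineGraph.neighborFinset e = (I u ∪ I v).erase e := by
    ext f
    simp [I, e, lineGraph_adj_iff_exists, eq_comm]
  have hI : I u ∩ I v = {e} := by
    ext f
    simp [I, e, Sym2.mem_and_mem_iff (S.ne_of_adj h), Subtype.ext_iff]
  have he : e ∈ I u ∪ I v := by simp [I, e]
  have hU := card_union_add_card_inter (I u) (I v)
  rw [hI, card_singleton, card_filter_mem_edgeSet, card_filter_mem_edgeSet] at hU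
  rw [← card_neighborFinset_eq_degree, hN, card_erase_of_mem he]
  have := card_pos.mpr ⟨e, he⟩
  omega

lemma IsRegularOfDegree.lineGraph_degree_add_two {t : ℕ} (hreg : S.IsRegularOfDegree t)
    (e : S.edgeSet) : S.lineGraph.degree e + 2 = 2 * t := by
  obtain ⟨e, he⟩ := e
  induction e using Sym2.inductionOn with
  | hf u v => rw [SimpleGraph.lineGraph_degree_add_two he, hreg u, hreg v, two_mul]

lemma IsRegularOfDegree.card_lineGraph_neighborFinset_sdiff_le {t : ℕ}
    (hreg : S.IsRegularOfDegree t) {e f : S.edgeSet} (hef : S.lineGraph.Adj e f) :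
    #(S.lineGraph.neighborFinset f \ insert e (S.lineGraph.neighborFinset e)) ≤ t - 1 := by
  obtain ⟨-, a, hae, haf⟩ := lineGraph_adj_iff_exists.mp hef
  set p := Sym2.Mem.other haf
  have hf : (f : Sym2 W) = s(a, p) := (Sym2.other_spec haf).symm
  have hpf : f ∈ ({g : S.edgeSet | p ∈ (g : Sym2 W)} : Finset _) := by simp [hf]
  calc _ ≤ #(({g : S.edgeSet | p ∈ (g : Sym2 W)} : Finset _).erase f) := by
        refine card_le_card fun g hg => ?_
        simp only [mem_sdiff, mem_insert, mem_neighborFinset, not_or] at hg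
        obtain ⟨hfg, hge, hneg⟩ := hg
        obtain ⟨hfg', q, hqf, hqg⟩ := lineGraph_adj_iff_exists.mp hfg
        rcases Sym2.mem_iff.mp (hf ▸ hqf) with rfl | rfl
        · exact absurd (lineGraph_adj_iff_exists.mpr ⟨Ne.symm hge, q, hae, hqg⟩) hneg
        · simpa using ⟨Ne.symm hfg', hqg⟩
    _ = t - 1 := by rw [card_erase_of_mem hpf, card_filter_mem_edgeSet, hreg p]

lemma IsRegularOfDegree.card_neighborFinset_sdiff_le_of_compl_iso_lineGraph {α : Type*}
    [Fintype α] [DecidableEq α] {H : SimpleGraph α} [DecidableRel H.Adj] {t : ℕ}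
    (hreg : S.IsRegularOfDegree t) (ψ : Hᶜ ≃g S.lineGraph) {u z : α} (hne : u ≠ z)
    (hnadj : ¬H.Adj u z) : #(H.neighborFinset z \ H.neighborFinset u) ≤ t - 1 := by
  calc _ = #((H.neighborFinset z \ H.neighborFinset u).map ψ.toEquiv.toEmbedding) :=
        (card_map _).symm
    _ ≤ #(S.lineGraph.neighborFinset (ψ u) \
          insert (ψ z) (S.lineGraph.neighborFinset (ψ z))) := by
        refine card_le_card fun g hg => ?_
        obtain ⟨a, ha, rfl⟩ := mem_map.mp hg
        simp only [mem_sdiff, mem_neighborFinset] at ha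
        have hua : u ≠ a := by rintro rfl; exact hnadj ha.1.symm
        simp [ψ.map_adj_iff, ha.1, ha.2, hua, ha.1.ne.symm]
    _ ≤ t - 1 :=
        hreg.card_lineGraph_neighborFinset_sdiff_le
          (ψ.map_adj_iff.mpr ⟨hne.symm, (hnadj ·.symm)⟩)

end LineGraph

section LocalGraph

variable {V W : Type*} [Fintype V] [DecidableEq V] [Fintype W] [DecidableEq W]
  {G : SimpleGraph V} [DecidableRel G.Adj] {S : SimpleGraph W} [DecidableRel S.Adj] {x : V}
  {t : ℕ}

lemma card_farNeighborFinset_add_two_of_compl_localGraph_iso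
    (φ : (G.localGraph x)ᶜ ≃g S.lineGraph) (hreg : S.IsRegularOfDegree t) {z : V}
    (hxz : G.Adj x z) : #(G.farNeighborFinset z x) + 2 = 2 * t := by
  rw [← map_neighborFinset_compl_localGraph x ⟨z, hxz⟩, card_map,
    card_neighborFinset_eq_degree, ← φ.degree_eq]
  exact hreg.lineGraph_degree_add_two _

lemma card_inter_neighborFinset_sdiff_le_of_compl_localGraph_iso
    (φ : (G.localGraph x)ᶜ ≃g S.lineGraph) (hreg : S.IsRegularOfDegree t) {z u : V}
    (hxz : G.Adj x z) (hu : u ∈ G.farNeighborFinset z x) :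
    #((G.neighborFinset x ∩ G.neighborFinset z) \ G.neighborFinset u) ≤ t - 1 := by
  simp only [farNeighborFinset, mem_sdiff, mem_insert, mem_neighborFinset, not_or] at hu
  obtain ⟨hxu, hne, hnadj⟩ := hu
  have h := hreg.card_neighborFinset_sdiff_le_of_compl_iso_lineGraph φ
    (u := ⟨u, hxu⟩) (z := ⟨z, hxz⟩) (by simpa [Subtype.ext_iff] using hne) (hnadj ·.symm)
  rw [← card_map (Function.Embedding.subtype _), Finset.map_sdiff, map_neighborFinset_localGraph,
    map_neighborFinset_localGraph] at h
  exact (card_le_card (sdiff_subset_sdiff subset_rfl inter_subset_right)).trans h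

end LocalGraph

end SimpleGraph

namespace SimpleGraph.IsDRG

variable {V : Type*} [Fintype V] [DecidableEq V] {G : SimpleGraph V} [DecidableRel G.Adj]
  {D : ℕ} {b c : ℕ → ℕ}

lemma isRegularOfDegree (hG : G.IsDRG D b c) : G.IsRegularOfDegree (b 0) := fun v => by
  rw [← card_neighborFinset_eq_degree, ← hG.b_eq 0 D.zero_le v v dist_self]
  refine congrArg card (filter_true_of_mem fun w hw => ?_).symm
  simpa using (mem_neighborFinset _ _ _).mp hw

lemma card_farNeighborFinset (hG : G.IsDRG D b c) (hD : 1 ≤ D) {u v : V} (huv : G.Adj u v) :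
    #(G.farNeighborFinset u v) = b 1 := by
  rw [farNeighborFinset_eq_filter_dist huv, ← hG.b_eq 1 hD u v (dist_eq_one_iff_adj.mpr huv)]

lemma card_inter_neighborFinset_of_adj (hG : G.IsDRG D b c) (hD : 1 ≤ D) {u v : V}
    (huv : G.Adj u v) : #(G.neighborFinset u ∩ G.neighborFinset v) + b 1 + 1 = b 0 := by
  rw [← hG.card_farNeighborFinset hD huv, ← hG.isRegularOfDegree v]
  have := card_farNeighborFinset_add huv
  omega

lemma card_inter_neighborFinset_of_dist_eq_two (hG : G.IsDRG D b c) (hD : 2 ≤ D) {u v : V}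
    (huv : G.dist u v = 2) : #(G.neighborFinset u ∩ G.neighborFinset v) = c 2 := by
  rw [← hG.c_eq 2 hD u v huv, inter_comm]
  congr 1
  ext w
  simp [← dist_eq_one_iff_adj]

lemma exists_adj (hG : G.IsDRG D b c) (hD : 1 ≤ D) (v : V) : ∃ w, G.Adj v w := by
  obtain ⟨u, w, huw⟩ := hG.exists_dist
  have : Nontrivial V := ⟨u, w, by rintro rfl; simp at huw; omega⟩
  exact hG.connected.preconnected.exists_adj_of_nontrivial v

end SimpleGraph.IsDRG

theorem c2_lower_bound_of_compl_local_lineGraph_regular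
    {V W : Type*} [Fintype V] [DecidableEq V] [Fintype W] [DecidableEq W]
    (G : SimpleGraph V) [DecidableRel G.Adj] (D : ℕ) (b c : ℕ → ℕ) (hD : 2 ≤ D)
    (hG : G.IsDRG D b c) (x : V)
    (S : SimpleGraph W) [DecidableRel S.Adj] (t : ℕ) (ht : 2 ≤ t)
    (hreg : S.IsRegularOfDegree t)
    (hiso : Nonempty ((G.localGraph x)ᶜ ≃g S.lineGraph)) :
    (b 0 : ℤ) - 3 * t + 3 ≤ (c 2 : ℤ) := by
  obtain ⟨φ⟩ := hiso
  obtain ⟨z, hxz⟩ := hG.exists_adj (by omega) x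
  have hb1 := hG.card_farNeighborFinset (by omega) hxz.symm
  have hfar := card_farNeighborFinset_add_two_of_compl_localGraph_iso φ hreg hxz
  have ha := hG.card_inter_neighborFinset_of_adj (by omega) hxz
  have hedge : ∀ u v, G.Adj u v →
      #(G.neighborFinset u ∩ G.neighborFinset v) = b 0 - b 1 - 1 :=
    fun u v huv => by have := hG.card_inter_neighborFinset_of_adj (by omega) huv; omega
  obtain ⟨y, hy, hmy⟩ := exists_mem_farNeighborFinset_card_sdiff_le hG.isRegularOfDegree hedge
    hxz (card_pos.mp (by omega))
    fun u hu => card_inter_neighborFinset_sdiff_le_of_compl_localGraph_iso φ hreg hxz hu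
  have hxy : G.dist x y = 2 := by
    rw [farNeighborFinset_eq_filter_dist hxz] at hy
    exact (mem_filter.mp hy).2
  have hc := card_inter_neighborFinset_add_one_le hxz hy
  rw [hG.card_inter_neighborFinset_of_dist_eq_two hD hxy] at hc
  have := card_inter_add_card_sdiff (G.neighborFinset x ∩ G.neighborFinset z) (G.neighborFinset y)
  omega
end

section
/- Let Γ be a distance-regular graph with valency k such that for some vertex x the complement of the local graph Δ(x) is the line graph of a bipartite semiregular graph Σ with degrees s and t satisfying 2 ≤ s < t. Then c₂ ≥ k − 2s − t + 3. -/
open SimpleGraph Finset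

/-!
Since `Δ(x)ᶜ ≅ L(Σ)`, the `k` vertices of `Δ(x)` are the edges of `Σ`, two of them being adjacent
in `Δ(x)` iff they are distinct and disjoint edges. Take `u` of degree `t ≥ 2` and two of its
neighbours `v₁, v₂`, of degree `s`. The edges `uv₁` and `uv₂` meet, so the corresponding vertices
`y, z` of `Δ(x)` are at distance `2` in `Γ`. Their common neighbours include `x` and every edge of
`Σ` avoiding `u, v₁, v₂`; at most `t + 2(s - 1)` edges touch `u, v₁, v₂`, so
`c₂ ≥ 1 + k - t - 2(s - 1)`.
-/

namespace SimpleGraph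

section DistanceRegular

variable {V : Type*} [Fintype V] [DecidableEq V] {G : SimpleGraph V} [DecidableRel G.Adj]
  {D : ℕ} {b c : ℕ → ℕ}

theorem IsDRG.b_zero_eq_degree (hG : G.IsDRG D b c) (x : V) : b 0 = G.degree x := by
  rw [← hG.b_eq 0 D.zero_le x x dist_self, ← card_neighborFinset_eq_degree]
  congr 1
  exact filter_true_of_mem fun z hz => by simpa using hz

theorem IsDRG.degree_pos (hG : G.IsDRG D b c) (hD : 0 < D) (x : V) : 0 < G.degree x := by
  obtain ⟨y, z, hyz⟩ := hG.exists_dist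
  have : Nontrivial V := ⟨y, z, fun h => by subst h; simp at hyz; omega⟩
  exact hG.connected.preconnected.degree_pos_of_nontrivial x

theorem IsDRG.card_inter_neighborFinset_eq_c_two (hG : G.IsDRG D b c) (hD : 2 ≤ D) {y z : V}
    (h : G.dist y z = 2) : #(G.neighborFinset y ∩ G.neighborFinset z) = c 2 := by
  rw [← hG.c_eq 2 hD y z h, inter_comm, ← filter_mem_eq_inter]
  congr 1
  ext w
  simp

end DistanceRegular

theorem dist_eq_two_of_adj_of_adj {V : Type*} {G : SimpleGraph V} {x y z : V} (hy : G.Adj x y)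
    (hz : G.Adj x z) (hne : y ≠ z) (h : ¬ G.Adj y z) : G.dist y z = 2 := by
  have : G.edist y z = 2 := edist_eq_two_iff.mpr ⟨hne, h, x, hy.symm, hz.symm⟩
  simp [dist, this]

theorem Iso.adj_symm_iff_of_compl {α β : Type*} {H : SimpleGraph α} {L : SimpleGraph β}
    (e : Hᶜ ≃g L) {a b : β} (hab : a ≠ b) : H.Adj (e.symm a) (e.symm b) ↔ ¬ L.Adj a b := by
  rw [← e.symm.map_adj_iff, compl_adj]
  simp [hab]

theorem card_filter_add_one_le_card_inter_neighborFinset {V β : Type*} [Fintype V]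
    [DecidableEq V] {G : SimpleGraph V} [DecidableRel G.Adj] [Fintype β] [DecidableEq β]
    {L : SimpleGraph β} [DecidableRel L.Adj] (x : V) (e : (G.localGraph x)ᶜ ≃g L) (a₁ a₂ : β) :
    #{a | a ≠ a₁ ∧ a ≠ a₂ ∧ ¬ L.Adj a₁ a ∧ ¬ L.Adj a₂ a} + 1 ≤
      #(G.neighborFinset (e.symm a₁) ∩ G.neighborFinset (e.symm a₂)) := by
  set A : Finset β := {a | a ≠ a₁ ∧ a ≠ a₂ ∧ ¬ L.Adj a₁ a ∧ ¬ L.Adj a₂ a}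
  have hx : x ∉ A.image fun a => (e.symm a : V) := by
    simp only [mem_image, not_exists, not_and]
    exact fun a _ h => G.irrefl (h ▸ (e.symm a).2)
  have hsub : insert x (A.image fun a => (e.symm a : V)) ⊆
      G.neighborFinset (e.symm a₁) ∩ G.neighborFinset (e.symm a₂) := by
    intro w hw
    simp only [mem_insert, mem_image, mem_inter, mem_neighborFinset] at hw ⊢
    rcases hw with rfl | ⟨a, ha, rfl⟩
    · exact ⟨(e.symm a₁).2.symm, (e.symm a₂).2.symm⟩
    · obtain ⟨h₁, h₂, hn₁, hn₂⟩ := (mem_filter.mp ha).2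
      exact ⟨(e.adj_symm_iff_of_compl (Ne.symm h₁)).mpr hn₁,
        (e.adj_symm_iff_of_compl (Ne.symm h₂)).mpr hn₂⟩
  calc #A + 1 = #(insert x (A.image fun a => (e.symm a : V))) := by
        rw [card_insert_of_notMem hx,
          card_image_of_injective A fun a b h => e.symm.injective (Subtype.val_injective h)]
    _ ≤ _ := card_le_card hsub

theorem lineGraph_adj_or_eq_iff_exists {W : Type*} {S : SimpleGraph W} {f g : S.edgeSet} :
    S.lineGraph.Adj f g ∨ f = g ↔ ∃ w, w ∈ (f : Sym2 W) ∧ w ∈ (g : Sym2 W) := by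
  by_cases hfg : f = g
  · subst hfg
    simpa using ⟨_, Sym2.out_fst_mem (f : Sym2 W)⟩
  · simp [lineGraph_adj_iff_exists, hfg]

theorem ne_and_not_lineGraph_adj_of_notMem {W : Type*} {S : SimpleGraph W} {u v : W}
    (h : S.Adj u v) {f : S.edgeSet} (hu : u ∉ (f : Sym2 W)) (hv : v ∉ (f : Sym2 W)) :
    f ≠ ⟨s(u, v), h⟩ ∧ ¬ S.lineGraph.Adj ⟨s(u, v), h⟩ f := by
  have hdisj := (lineGraph_adj_or_eq_iff_exists (f := ⟨s(u, v), h⟩) (g := f)).not.mpr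
    (by simp [hu, hv])
  exact ⟨fun hf => hdisj (Or.inr hf.symm), fun hf => hdisj (Or.inl hf)⟩

section LineGraph

variable {W : Type*} [Fintype W] [DecidableEq W] {S : SimpleGraph W} [DecidableRel S.Adj]

theorem card_incidenceFinset_union_add_two_le {u v₁ v₂ : W} (h₁ : S.Adj u v₁)
    (h₂ : S.Adj u v₂) :
    #(S.incidenceFinset u ∪ S.incidenceFinset v₁ ∪ S.incidenceFinset v₂) + 2 ≤
      S.degree u + S.degree v₁ + S.degree v₂ := by
  have card_union_add_one_le {A B : Finset (Sym2 W)} {f : Sym2 W} (hA : f ∈ A) (hB : f ∈ B) :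
      #(A ∪ B) + 1 ≤ #A + #B := by
    rw [← card_union_add_card_inter]
    exact Nat.add_le_add_left (card_pos.mpr ⟨f, mem_inter.mpr ⟨hA, hB⟩⟩) _
  have hu₁ : #(S.incidenceFinset u ∪ S.incidenceFinset v₁) + 1 ≤ S.degree u + S.degree v₁ := by
    simpa only [card_incidenceFinset_eq_degree] using card_union_add_one_le
      ((S.mem_incidenceFinset _ _).mpr ⟨h₁, Sym2.mem_mk_left u v₁⟩)
      ((S.mem_incidenceFinset _ _).mpr ⟨h₁, Sym2.mem_mk_right u v₁⟩)
  have hu₁₂ := card_union_add_one_le (A := S.incidenceFinset u ∪ S.incidenceFinset v₁)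
    (mem_union_left _ ((S.mem_incidenceFinset _ _).mpr ⟨h₂, Sym2.mem_mk_left u v₂⟩))
    ((S.mem_incidenceFinset _ _).mpr ⟨h₂, Sym2.mem_mk_right u v₂⟩)
  rw [card_incidenceFinset_eq_degree] at hu₁₂
  omega

theorem card_edgeSet_add_two_le {u v₁ v₂ : W} (h₁ : S.Adj u v₁) (h₂ : S.Adj u v₂) :
    Fintype.card S.edgeSet + 2 ≤
      #{f : S.edgeSet | u ∉ (f : Sym2 W) ∧ v₁ ∉ (f : Sym2 W) ∧ v₂ ∉ (f : Sym2 W)} +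
        S.degree u + S.degree v₁ + S.degree v₂ := by
  have hmeet : #{f : S.edgeSet | ¬ (u ∉ (f : Sym2 W) ∧ v₁ ∉ (f : Sym2 W) ∧ v₂ ∉ (f : Sym2 W))} ≤
      #(S.incidenceFinset u ∪ S.incidenceFinset v₁ ∪ S.incidenceFinset v₂) := by
    rw [← card_image_of_injective _ Subtype.val_injective]
    refine card_le_card fun g hg => ?_
    obtain ⟨f, hf, rfl⟩ := mem_image.mp hg
    have hf' : u ∈ (f : Sym2 W) ∨ v₁ ∈ (f : Sym2 W) ∨ v₂ ∈ (f : Sym2 W) := by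
      simpa [or_iff_not_imp_left] using hf
    simp only [mem_union, mem_incidenceFinset]
    have hf_edge := f.2
    tauto
  have hunion := card_incidenceFinset_union_add_two_le h₁ h₂
  have hsplit := card_filter_add_card_filter_not (s := (univ : Finset S.edgeSet))
    fun f => u ∉ (f : Sym2 W) ∧ v₁ ∉ (f : Sym2 W) ∧ v₂ ∉ (f : Sym2 W)
  rw [card_univ] at hsplit
  omega

end LineGraph

theorem IsDRG.card_filter_notMem_add_one_le_c_two {V W : Type*} [Fintype V] [DecidableEq V]
    {G : SimpleGraph V} [DecidableRel G.Adj] {D : ℕ} {b c : ℕ → ℕ} (hG : G.IsDRG D b c)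
    (hD : 2 ≤ D) [Fintype W] [DecidableEq W] {S : SimpleGraph W} [DecidableRel S.Adj] {x : V}
    (e : (G.localGraph x)ᶜ ≃g S.lineGraph) {u v₁ v₂ : W} (h₁ : S.Adj u v₁) (h₂ : S.Adj u v₂)
    (hv : v₁ ≠ v₂) :
    #{f : S.edgeSet | u ∉ (f : Sym2 W) ∧ v₁ ∉ (f : Sym2 W) ∧ v₂ ∉ (f : Sym2 W)} + 1 ≤ c 2 := by
  classical
  let f₁ : S.edgeSet := ⟨s(u, v₁), h₁⟩
  let f₂ : S.edgeSet := ⟨s(u, v₂), h₂⟩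
  have hf : f₁ ≠ f₂ := fun h => hv (Sym2.congr_right.mp (congrArg Subtype.val h))
  have hadj : S.lineGraph.Adj f₁ f₂ :=
    lineGraph_adj_iff_exists.mpr ⟨hf, u, Sym2.mem_mk_left u v₁, Sym2.mem_mk_left u v₂⟩
  have hdist : G.dist (e.symm f₁) (e.symm f₂) = 2 :=
    dist_eq_two_of_adj_of_adj (e.symm f₁).2 (e.symm f₂).2
      (fun h => hf (e.symm.injective (Subtype.val_injective h)))
      ((e.adj_symm_iff_of_compl hf).not.mpr (not_not.mpr hadj))
  have hdisjoint : #{f : S.edgeSet | u ∉ (f : Sym2 W) ∧ v₁ ∉ (f : Sym2 W) ∧ v₂ ∉ (f : Sym2 W)} ≤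
      #{f | f ≠ f₁ ∧ f ≠ f₂ ∧ ¬ S.lineGraph.Adj f₁ f ∧ ¬ S.lineGraph.Adj f₂ f} := by
    refine card_le_card (monotone_filter_right _ fun f _ ⟨hu, hv₁, hv₂⟩ => ?_)
    obtain ⟨hf₁, hf₁'⟩ := ne_and_not_lineGraph_adj_of_notMem h₁ hu hv₁
    obtain ⟨hf₂, hf₂'⟩ := ne_and_not_lineGraph_adj_of_notMem h₂ hu hv₂
    exact ⟨hf₁, hf₂, hf₁', hf₂'⟩
  calc _ ≤ #{f | f ≠ f₁ ∧ f ≠ f₂ ∧ ¬ S.lineGraph.Adj f₁ f ∧ ¬ S.lineGraph.Adj f₂ f} + 1 := by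
        omega
    _ ≤ #(G.neighborFinset (e.symm f₁) ∩ G.neighborFinset (e.symm f₂)) :=
        card_filter_add_one_le_card_inter_neighborFinset x e f₁ f₂
    _ = c 2 := hG.card_inter_neighborFinset_eq_c_two hD hdist


end SimpleGraph

theorem c2_lower_bound_of_compl_local_lineGraph_semiregular_general
    {V W : Type*} [Fintype V] [DecidableEq V] [Fintype W]
    (G : SimpleGraph V) [DecidableRel G.Adj] (D : ℕ) (b c : ℕ → ℕ) (hD : 2 ≤ D)
    (hG : G.IsDRG D b c) (x : V)
    (S : SimpleGraph W) [DecidableRel S.Adj] (s t : ℕ) (hs : 2 ≤ s) (hst : s < t)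
    (P : Finset W) (hbip : ∀ ⦃a b'⦄, S.Adj a b' → (a ∈ P ↔ b' ∉ P))
    (hdegP : ∀ a ∈ P, S.degree a = s) (hdegQ : ∀ a ∉ P, S.degree a = t)
    (hiso : Nonempty ((G.localGraph x)ᶜ ≃g S.lineGraph)) :
    (b 0 : ℤ) - 2 * s - t + 3 ≤ (c 2 : ℤ) := by
  classical
  obtain ⟨e⟩ := hiso
  have hk : Fintype.card S.edgeSet = b 0 := by
    rw [hG.b_zero_eq_degree x, ← card_neighborSet_eq_degree]
    exact (Fintype.card_congr e.toEquiv).symm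
  obtain ⟨u, hu⟩ : ∃ u, u ∉ P := by
    obtain ⟨⟨f, hf⟩⟩ : Nonempty S.edgeSet :=
      Fintype.card_pos_iff.mp (hk ▸ hG.b_zero_eq_degree x ▸ hG.degree_pos (by omega) x)
    induction f using Sym2.ind with
    | _ a a' => exact if ha : a ∈ P then ⟨a', (hbip hf).mp ha⟩ else ⟨a, ha⟩
  have hu' : S.degree u = t := hdegQ u hu
  obtain ⟨v₁, h₁, v₂, h₂, hv⟩ : ∃ v₁ ∈ S.neighborFinset u, ∃ v₂ ∈ S.neighborFinset u, v₁ ≠ v₂ :=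
    one_lt_card.mp (by rw [card_neighborFinset_eq_degree, hu']; omega)
  rw [mem_neighborFinset] at h₁ h₂
  have hv₁ : S.degree v₁ = s := hdegP v₁ (by have := hbip h₁; tauto)
  have hv₂ : S.degree v₂ = s := hdegP v₂ (by have := hbip h₂; tauto)
  have hcommon := hG.card_filter_notMem_add_one_le_c_two hD e h₁ h₂ hv
  have hcount := card_edgeSet_add_two_le h₁ h₂
  omega

theorem c2_lower_bound_of_compl_local_lineGraph_semiregular
    {V W : Type*} [Fintype V] [DecidableEq V] [Fintype W] [DecidableEq W]
    (G : SimpleGraph V) [DecidableRel G.Adj] (D : ℕ) (b c : ℕ → ℕ) (hD : 2 ≤ D)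
    (hG : G.IsDRG D b c) (x : V)
    (S : SimpleGraph W) [DecidableRel S.Adj] (s t : ℕ) (hs : 2 ≤ s) (hst : s < t)
    (hconn : S.Connected)
    (P : Finset W) (hbip : ∀ ⦃a b'⦄, S.Adj a b' → (a ∈ P ↔ b' ∉ P))
    (hdegP : ∀ a ∈ P, S.degree a = s) (hdegQ : ∀ a ∉ P, S.degree a = t)
    (hiso : Nonempty ((G.localGraph x)ᶜ ≃g S.lineGraph)) :
    (b 0 : ℤ) - 2 * s - t + 3 ≤ (c 2 : ℤ) :=
  c2_lower_bound_of_compl_local_lineGraph_semiregular_general G D b c hD hG x S s t hs hst P hbip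
    hdegP hdegQ hiso
end

section
/- Let Γ be a connected non-complete strongly regular graph with ν vertices, valency k, intersection number c₂ = μ, and second largest eigenvalue θ₁. If Γ contains an independent set (coclique) C of size γ ≥ 1, then θ₁ ≤ (ν − γ)(k − c₂)/(γ·k). -/
open SimpleGraph Finset

set_option maxHeartbeats 1000000

theorem srg_coclique_eig_bound {V : Type*} [Fintype V] [DecidableEq V]
    (G : SimpleGraph V) [DecidableRel G.Adj] (n k ℓ μ : ℕ)
    (hG : G.IsSRGWith n k ℓ μ) (hconn : G.Connected) (hnc : G ≠ ⊤) (hμ : 1 ≤ μ)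
    (θ₁ θ₂ : ℝ)
    (h1 : θ₁ ^ 2 - ((ℓ : ℝ) - μ) * θ₁ - ((k : ℝ) - μ) = 0)
    (h2 : θ₂ ^ 2 - ((ℓ : ℝ) - μ) * θ₂ - ((k : ℝ) - μ) = 0)
    (hlt : θ₂ < θ₁)
    (C : Finset V) (γ : ℕ) (hγ : 1 ≤ γ) (hCcard : C.card = γ)
    (hCind : ∀ u ∈ C, ∀ v ∈ C, ¬ G.Adj u v) :
    θ₁ ≤ ((n : ℝ) - γ) * ((k : ℝ) - μ) / (γ * k) := by
  classical
  have hcard : Fintype.card V = n := hG.card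
  -- there are at least two vertices
  have hn2 : 1 < Fintype.card V := by
    by_contra h
    push_neg at h
    have hss : Subsingleton V := Fintype.card_le_one_iff_subsingleton.mp h
    apply hnc
    ext u v
    simp only [top_adj]
    constructor
    · exact fun h' => h'.ne
    · intro h'; exact absurd (Subsingleton.elim u v) h'
  -- there is an edge
  obtain ⟨a, b, hab⟩ := Fintype.exists_pair_of_one_lt_card hn2
  obtain ⟨w⟩ := hconn a b
  have hedge : ∃ u v : V, G.Adj u v := by
    cases w with
    | nil => exact absurd rfl hab
    | cons h p => exact ⟨_, _, h⟩
  obtain ⟨a₀, b₀, hadj⟩ := hedge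
  have hk1 : 1 ≤ k := by
    have h0 : 0 < G.degree a₀ := by
      rw [← card_neighborFinset_eq_degree]
      exact card_pos.mpr ⟨b₀, by simp [hadj]⟩
    rw [hG.regular a₀] at h0
    omega
  have hlk : ℓ + 1 ≤ k := by
    have h0 := hadj.card_commonNeighbors_lt_degree
    rw [hG.regular a₀, hG.of_adj a₀ b₀ hadj] at h0
    omega
  have hkn : k + 1 ≤ n := by
    have h0 := G.degree_lt_card_verts a₀
    rw [hG.regular a₀, hcard] at h0
    omega
  -- a nonadjacent pair exists
  have hμk : μ ≤ k := by
    have hna : ∃ u v : V, u ≠ v ∧ ¬ G.Adj u v := by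
      by_contra h
      push_neg at h
      apply hnc
      ext u v
      simp only [top_adj]
      exact ⟨fun h' => h'.ne, fun hne => h u v hne⟩
    obtain ⟨u, v, hne, hna⟩ := hna
    have hμeq := hG.of_not_adj hne hna
    have h0 := G.card_commonNeighbors_le_degree_left u v
    rw [hG.regular u, hμeq] at h0
    exact h0
  have hγn : γ ≤ n := by
    rw [← hCcard, ← hcard]
    exact card_le_univ C
  have hn0 : 0 < n := by omega
  have hparam := SimpleGraph.IsSRGWith.param_eq G hG hn0
  -- cast the parameter identity to ℝ
  have hIr : (k : ℝ) * ((k : ℝ) - ℓ - 1) = ((n : ℝ) - k - 1) * μ := by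
    have h := hparam
    zify [show ℓ ≤ k by omega, show 1 ≤ k - ℓ by omega,
      show k ≤ n by omega, show 1 ≤ n - k by omega] at h
    push_cast
    exact_mod_cast h
  -- indicator functions
  set e : V → V → ℝ := fun u x => if G.Adj u x then 1 else 0 with he
  set d : V → ℝ := fun x => ∑ u ∈ C, e u x with hd
  have hd_deg : ∀ u : V, ∑ x : V, e u x = (k : ℝ) := by
    intro u
    rw [Finset.sum_boole]
    rw [show Finset.univ.filter (fun x => G.Adj u x) = G.neighborFinset u by
      ext x; simp [mem_neighborFinset]]
    rw [card_neighborFinset_eq_degree, hG.regular u]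
  have hdd : ∀ u v : V, ∑ x : V, e u x * e v x
      = (Fintype.card (G.commonNeighbors u v) : ℝ) := by
    intro u v
    have hpt : ∀ x : V, e u x * e v x
        = if x ∈ (G.commonNeighbors u v).toFinset then (1 : ℝ) else 0 := by
      intro x
      by_cases h1 : G.Adj u x <;> by_cases h2 : G.Adj v x <;>
        simp [he, h1, h2, Set.mem_toFinset, mem_commonNeighbors]
    rw [Finset.sum_congr rfl fun x _ => hpt x]
    rw [Finset.sum_ite_mem, Finset.univ_inter, Finset.sum_const, nsmul_eq_mul, mul_one,
      Set.toFinset_card]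
  -- diagonal terms
  have hdiag : ∀ u : V, ∑ x : V, e u x * e u x = (k : ℝ) := by
    intro u
    have : ∀ x : V, e u x * e u x = e u x := by
      intro x; by_cases h : G.Adj u x <;> simp [he, h]
    rw [Finset.sum_congr rfl fun x _ => this x, hd_deg]
  -- off-diagonal terms
  have hoff : ∀ u ∈ C, ∀ v ∈ C, u ≠ v → ∑ x : V, e u x * e v x = (μ : ℝ) := by
    intro u hu v hv hne
    rw [hdd u v, hG.of_not_adj hne (hCind u hu v hv)]
  -- sum of squares
  have hB : ∑ x : V, d x ^ 2 = (γ : ℝ) * ((γ : ℝ) * μ + ((k : ℝ) - μ)) := by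
    have h1' : ∑ x : V, d x ^ 2 = ∑ u ∈ C, ∑ v ∈ C, ∑ x : V, e u x * e v x := by
      simp_rw [hd, sq, Finset.sum_mul_sum]
      rw [Finset.sum_comm]
      exact Finset.sum_congr rfl fun u _ => Finset.sum_comm
    rw [h1']
    have h2' : ∀ u ∈ C, ∑ v ∈ C, ∑ x : V, e u x * e v x
        = (γ : ℝ) * μ + ((k : ℝ) - μ) := by
      intro u hu
      have h3' : ∀ v ∈ C, ∑ x : V, e u x * e v x
          = (μ : ℝ) + (if u = v then ((k : ℝ) - μ) else 0) := by
        intro v hv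
        by_cases h : u = v
        · subst h; rw [hdiag u]; simp
        · rw [hoff u hu v hv h]; simp [h]
      rw [Finset.sum_congr rfl h3', Finset.sum_add_distrib, Finset.sum_const, hCcard,
        Finset.sum_ite_eq, if_pos hu, nsmul_eq_mul]
    rw [Finset.sum_congr rfl h2', Finset.sum_const, hCcard, nsmul_eq_mul]
  -- sum over the complement
  have hzero : ∀ x ∈ C, d x = 0 := by
    intro x hx
    apply Finset.sum_eq_zero
    intro u hu
    simp [he, hCind u hu x hx]
  have hA : ∑ x ∈ Cᶜ, d x = (γ : ℝ) * k := by
    have htot : ∑ x : V, d x = (γ : ℝ) * k := by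
      rw [hd]
      rw [Finset.sum_comm]
      rw [Finset.sum_congr rfl fun u _ => hd_deg u, Finset.sum_const, hCcard, nsmul_eq_mul]
    have hsplit := Finset.sum_add_sum_compl C d
    rw [Finset.sum_eq_zero hzero, zero_add] at hsplit
    rw [hsplit, htot]
  -- Cauchy–Schwarz
  have hCS : (∑ x ∈ Cᶜ, d x) ^ 2 ≤ (Cᶜ.card : ℝ) * ∑ x ∈ Cᶜ, d x ^ 2 :=
    sq_sum_le_card_mul_sum_sq
  have hsub : ∑ x ∈ Cᶜ, d x ^ 2 ≤ ∑ x : V, d x ^ 2 :=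
    Finset.sum_le_sum_of_subset_of_nonneg (Finset.subset_univ _)
      (fun x _ _ => sq_nonneg _)
  have hccard : (Cᶜ.card : ℝ) = (n : ℝ) - γ := by
    rw [Finset.card_compl, hCcard, hcard]
    push_cast [Nat.cast_sub hγn]
    ring
  have hcount : ((γ : ℝ) * k) ^ 2
      ≤ ((n : ℝ) - γ) * ((γ : ℝ) * ((γ : ℝ) * μ + ((k : ℝ) - μ))) := by
    calc ((γ : ℝ) * k) ^ 2 = (∑ x ∈ Cᶜ, d x) ^ 2 := by rw [hA]
      _ ≤ (Cᶜ.card : ℝ) * ∑ x ∈ Cᶜ, d x ^ 2 := hCS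
      _ ≤ (Cᶜ.card : ℝ) * ∑ x : V, d x ^ 2 := by
          apply mul_le_mul_of_nonneg_left hsub
          positivity
      _ = ((n : ℝ) - γ) * ((γ : ℝ) * ((γ : ℝ) * μ + ((k : ℝ) - μ))) := by
          rw [hccard, hB]
  -- eigenvalue algebra
  have h3 : (θ₁ - θ₂) * (θ₁ + θ₂ - ((ℓ : ℝ) - μ)) = 0 := by linear_combination h1 - h2
  have hsum : θ₁ + θ₂ = (ℓ : ℝ) - μ := by
    rcases mul_eq_zero.mp h3 with h | h
    · exact absurd h (by linarith)
    · linarith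
  have hts : θ₁ * (-θ₂) = (k : ℝ) - μ := by linear_combination h1 - θ₁ * hsum
  set s : ℝ := -θ₂ with hs
  have hsrel : s ^ 2 + ((ℓ : ℝ) - μ) * s - ((k : ℝ) - μ) = 0 := by
    rw [hs]; linear_combination h2
  have hμk' : (μ : ℝ) ≤ k := by exact_mod_cast hμk
  have hlk' : (ℓ : ℝ) + 1 ≤ k := by exact_mod_cast hlk
  have hγ1' : (1 : ℝ) ≤ γ := by exact_mod_cast hγ
  have hk1' : (1 : ℝ) ≤ k := by exact_mod_cast hk1
  have hμ1' : (1 : ℝ) ≤ μ := by exact_mod_cast hμ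
  have hγn' : (γ : ℝ) ≤ n := by exact_mod_cast hγn
  have ht0 : 0 ≤ θ₁ := by
    by_contra h
    push_neg at h
    have hspos : 0 < s := by rw [hs]; linarith
    nlinarith [hts]
  by_cases hkμ : k = μ
  · -- degenerate case k = μ : θ₁ = 0 and the RHS is 0
    have hkμ' : (k : ℝ) = μ := by exact_mod_cast hkμ
    have hfact : θ₁ * (θ₁ - ((ℓ : ℝ) - μ)) = 0 := by linear_combination h1 + hkμ'
    have hθ0 : θ₁ ≤ 0 := by
      rcases mul_eq_zero.mp hfact with h | h
      · linarith
      · linarith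
    rw [hkμ']
    simp only [sub_self, mul_zero, zero_div]
    linarith
  · have hkm' : (μ : ℝ) < k := lt_of_le_of_ne hμk' (by exact_mod_cast Ne.symm hkμ)
    have htpos : 0 < θ₁ := by
      rcases ht0.lt_or_eq with h | h
      · exact h
      · exfalso; rw [← h, zero_mul] at hts; linarith
    have hspos : 0 < s := by
      by_contra h
      push_neg at h
      nlinarith [mul_nonneg ht0 (neg_nonneg.mpr h), hts]
    have hγpos : (0 : ℝ) < γ := by linarith
    -- f(γ) ≤ 0
    have hf : (μ : ℝ) * (γ : ℝ) ^ 2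
        + (γ : ℝ) * ((k : ℝ) ^ 2 + k - ((n : ℝ) + 1) * μ)
        - (n : ℝ) * ((k : ℝ) - μ) ≤ 0 := by
      have hgf : (γ : ℝ) * ((μ : ℝ) * (γ : ℝ) ^ 2
          + (γ : ℝ) * ((k : ℝ) ^ 2 + k - ((n : ℝ) + 1) * μ)
          - (n : ℝ) * ((k : ℝ) - μ))
          = ((γ : ℝ) * k) ^ 2
            - ((n : ℝ) - γ) * ((γ : ℝ) * ((γ : ℝ) * μ + ((k : ℝ) - μ))) := by ring
      by_contra h
      push_neg at h
      have := mul_pos hγpos h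
      rw [hgf] at this
      linarith [hcount]
    -- key factorization
    have hkey : ((γ : ℝ) * ((k : ℝ) + s) - (n : ℝ) * s)
        * ((μ : ℝ) * s * γ + ((k : ℝ) - μ) * ((k : ℝ) + s))
        = s * ((k : ℝ) + s) * ((μ : ℝ) * (γ : ℝ) ^ 2
          + (γ : ℝ) * ((k : ℝ) ^ 2 + k - ((n : ℝ) + 1) * μ)
          - (n : ℝ) * ((k : ℝ) - μ)) := by
      linear_combination (-(γ : ℝ) * (k : ℝ) ^ 2) * hsrel - (s * (γ : ℝ) * (k : ℝ)) * hIr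
    have hBpos : 0 < (μ : ℝ) * s * γ + ((k : ℝ) - μ) * ((k : ℝ) + s) := by
      have h1' : 0 < (μ : ℝ) * s * γ := by positivity
      have h2' : 0 < ((k : ℝ) - μ) * ((k : ℝ) + s) := by
        apply mul_pos <;> linarith
      linarith
    have hP : (γ : ℝ) * ((k : ℝ) + s) - (n : ℝ) * s ≤ 0 := by
      by_contra h
      push_neg at h
      have hprod := mul_pos h hBpos
      rw [hkey] at hprod
      have hsk : 0 < s * ((k : ℝ) + s) := by positivity
      nlinarith [hf]
    -- conclude
    rw [le_div_iff₀ (by positivity)]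
    have hq : 0 ≤ θ₁ * ((n : ℝ) * s - (γ : ℝ) * ((k : ℝ) + s)) :=
      mul_nonneg ht0 (by linarith)
    nlinarith [hq, hts]
end

section
/- Let Γ be a distance-regular graph with diameter D ≥ 3, valency k, and intersection numbers a₁, b₁, c₂. If two vertices at distance 2 have two non-adjacent common neighbors (an induced quadrangle through them exists), then c₂ ≥ 2(a₁+1) − k + 2. -/
open SimpleGraph Finset

theorem c2_bound_of_not_terwilliger {V : Type*} [Fintype V] [DecidableEq V]
    (G : SimpleGraph V) [DecidableRel G.Adj] (D : ℕ) (b c : ℕ → ℕ) (hD : 3 ≤ D)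
    (hG : G.IsDRG D b c)
    (u w v₁ v₂ : V) (huw : G.dist u w = 2) (hv : v₁ ≠ v₂)
    (h1 : G.Adj u v₁) (h2 : G.Adj w v₁) (h3 : G.Adj u v₂) (h4 : G.Adj w v₂)
    (hnadj : ¬ G.Adj v₁ v₂) :
    2 * (((b 0 : ℤ) - b 1 - 1) + 1) - (b 0 : ℤ) + 2 ≤ (c 2 : ℤ) := by
  obtain ⟨hconn, hdle, -, hb, hc, -, -⟩ := hG
  have hd1 : ∀ {x y : V}, G.Adj x y → G.dist x y = 1 := fun h => dist_eq_one_iff_adj.mpr h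
  set N := G.neighborFinset v₁ with hN
  have hk : N.card = b 0 := by
    have h0 := hb 0 (by omega) v₁ v₁ SimpleGraph.dist_self
    have heq : N.filter (fun z => G.dist v₁ z = 0 + 1) = N :=
      Finset.filter_true_of_mem fun z hz => hd1 ((G.mem_neighborFinset _ _).mp hz)
    rw [heq] at h0
    exact h0
  have aux : ∀ x : V, G.Adj x v₁ →
      (N.filter (fun z => G.Adj x z)).card + b 1 + 1 = b 0 := by
    intro x hx
    have hb1 : (N.filter (fun z => G.dist x z = 2)).card = b 1 :=
      hb 1 (by omega) x v₁ (hd1 hx)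
    have hsplit : N.filter (fun z => ¬ G.Adj x z) =
        insert x (N.filter (fun z => G.dist x z = 2)) := by
      ext z
      simp only [Finset.mem_filter, Finset.mem_insert, hN, mem_neighborFinset]
      constructor
      · rintro ⟨hz, hnz⟩
        by_cases hzx : z = x
        · exact Or.inl hzx
        · refine Or.inr ⟨hz, ?_⟩
          have ht : G.dist x z ≤ G.dist x v₁ + G.dist v₁ z := hconn.dist_triangle
          rw [hd1 hx, hd1 hz] at ht
          have h0 : G.dist x z ≠ 0 := fun h => hzx (hconn.dist_eq_zero_iff.mp h).symm
          have hone : G.dist x z ≠ 1 := fun h => hnz (dist_eq_one_iff_adj.mp h)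
          omega
      · rintro (rfl | ⟨hz, hz2⟩)
        · exact ⟨hx.symm, G.irrefl⟩
        · exact ⟨hz, fun h => by rw [hd1 h] at hz2; omega⟩
    have hxnot : x ∉ N.filter (fun z => G.dist x z = 2) := by
      simp [SimpleGraph.dist_self]
    have hfc := Finset.card_filter_add_card_filter_not
      (s := N) (p := fun z => G.Adj x z)
    rw [hsplit, Finset.card_insert_of_notMem hxnot, hb1, hk] at hfc
    omega
  set A := N.filter (fun z => G.Adj u z) with hAdef
  set B := N.filter (fun z => G.Adj w z) with hBdef
  have hA : A.card + b 1 + 1 = b 0 := aux u h1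
  have hB : B.card + b 1 + 1 = b 0 := aux w h2
  have huw' : u ≠ w := fun h => by rw [h, SimpleGraph.dist_self] at huw; omega
  have hUnion : (A ∪ B).card + 2 ≤ b 0 := by
    have hsub : A ∪ B ⊆ N \ {u, w} := by
      intro z hz
      rw [Finset.mem_union] at hz
      have hzN : z ∈ N := by
        rcases hz with h | h
        · exact (Finset.mem_filter.mp h).1
        · exact (Finset.mem_filter.mp h).1
      have hzu : z ≠ u := by
        rintro rfl
        rcases hz with h | h
        · exact G.irrefl (Finset.mem_filter.mp h).2
        · have := hd1 ((Finset.mem_filter.mp h).2.symm)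
          rw [this] at huw; omega
      have hzw : z ≠ w := by
        rintro rfl
        rcases hz with h | h
        · have := hd1 (Finset.mem_filter.mp h).2
          rw [this] at huw; omega
        · exact G.irrefl (Finset.mem_filter.mp h).2
      rw [Finset.mem_sdiff]
      exact ⟨hzN, by simp [hzu, hzw]⟩
    have hsubN : ({u, w} : Finset V) ⊆ N := by
      intro z hz
      rw [Finset.mem_insert, Finset.mem_singleton] at hz
      rcases hz with rfl | rfl
      · exact (G.mem_neighborFinset _ _).mpr h1.symm
      · exact (G.mem_neighborFinset _ _).mpr h2.symm
    have hcard2 : ({u, w} : Finset V).card = 2 := by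
      rw [Finset.card_insert_of_notMem (by simp [huw']), Finset.card_singleton]
    have := Finset.card_le_card hsub
    rw [Finset.card_sdiff_of_subset hsubN, hcard2, hk] at this
    have h2le : 2 ≤ b 0 := by
      rw [← hk]; exact hcard2 ▸ Finset.card_le_card hsubN
    omega
  have hc2 : ((G.neighborFinset w).filter (fun z => G.dist u z + 1 = 2)).card = c 2 :=
    hc 2 (by omega) u w huw
  have hsubS : insert v₁ (insert v₂ (A ∩ B)) ⊆
      (G.neighborFinset w).filter (fun z => G.dist u z + 1 = 2) := by
    intro z hz
    rw [Finset.mem_insert, Finset.mem_insert] at hz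
    rw [Finset.mem_filter, G.mem_neighborFinset]
    rcases hz with rfl | rfl | hz
    · exact ⟨h2, by rw [hd1 h1]⟩
    · exact ⟨h4, by rw [hd1 h3]⟩
    · rw [Finset.mem_inter, hAdef, hBdef, Finset.mem_filter, Finset.mem_filter] at hz
      exact ⟨hz.2.2, by rw [hd1 hz.1.2]⟩
  have hv1 : v₁ ∉ insert v₂ (A ∩ B) := by
    rw [Finset.mem_insert]
    rintro (rfl | h)
    · exact hv rfl
    · rw [Finset.mem_inter, hAdef, hBdef, Finset.mem_filter, Finset.mem_filter, hN,
        mem_neighborFinset] at h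
      exact G.irrefl h.1.1
  have hv2 : v₂ ∉ A ∩ B := by
    rw [Finset.mem_inter, hAdef, Finset.mem_filter, hN, mem_neighborFinset]
    rintro ⟨⟨h, -⟩, -⟩
    exact hnadj h
  have hSle : (A ∩ B).card + 2 ≤ c 2 := by
    have := Finset.card_le_card hsubS
    rw [hc2, Finset.card_insert_of_notMem hv1, Finset.card_insert_of_notMem hv2] at this
    omega
  have hiu : (A ∩ B).card + (A ∪ B).card = A.card + B.card :=
    Finset.card_inter_add_card_union A B
  omega
end

section
/- Let Γ be the complement of the Schläfli graph (a 10-regular strongly regular graph on 27 vertices with second largest eigenvalue 1). Let Σ be an induced (t+2)-regular subgraph of Γ on 3(t+1) vertices for some integer 0 ≤ t ≤ 7. Then the induced subgraph on the remaining 27 − 3(t+1) = 24 − 3t vertices is (9 − t)-regular. -/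
/-!
Let `M` be the adjacency matrix, `f` the indicator vector of `A` and `z = 27 f - |A| 𝟙`, which is
orthogonal to the Perron eigenvector `𝟙`. Regularity of `A` gives `zᵀ M z = zᵀ z`, while every
eigenvalue of `M` on `𝟙^⊥` is at most `1`; expanding `z` in an orthonormal eigenbasis, this
equality forces `M z = z`. Reading off `M z = z` at a vertex outside `A` counts its neighbours
in `A`: there are `t + 1` of them, hence `9 - t` outside `A`.
-/

open SimpleGraph Finset Matrix
theorem Matrix.IsSymm.dotProduct_mulVec_comm {n R : Type*} [Fintype n] [CommSemiring R]
    {M : Matrix n n R} (hM : M.IsSymm) (x y : n → R) : x ⬝ᵥ (M *ᵥ y) = y ⬝ᵥ (M *ᵥ x) := by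
  rw [dotProduct_mulVec, ← mulVec_transpose, hM.eq, dotProduct_comm]

namespace Matrix.IsHermitian

variable {n : Type*} [Fintype n] [DecidableEq n] {M : Matrix n n ℝ} (hM : M.IsHermitian)

theorem dotProduct_eq_sum_eigenvectorBasis (x y : n → ℝ) :
    x ⬝ᵥ y = ∑ j, ((hM.eigenvectorBasis j).ofLp ⬝ᵥ x) * ((hM.eigenvectorBasis j).ofLp ⬝ᵥ y) := by
  have h := hM.eigenvectorBasis.sum_inner_mul_inner (WithLp.toLp 2 x) (WithLp.toLp 2 y)
  simp only [EuclideanSpace.inner_eq_star_dotProduct, star_trivial] at h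
  simpa [dotProduct_comm] using h.symm

theorem eigenvectorBasis_dotProduct_mulVec (j : n) (x : n → ℝ) :
    (hM.eigenvectorBasis j).ofLp ⬝ᵥ (M *ᵥ x) =
      hM.eigenvalues j * ((hM.eigenvectorBasis j).ofLp ⬝ᵥ x) := by
  rw [dotProduct_mulVec, ← mulVec_transpose, ← conjTranspose_eq_transpose_of_trivial, hM.eq,
    hM.mulVec_eigenvectorBasis, smul_dotProduct, smul_eq_mul]

theorem eigenvectorBasis_dotProduct_eq_zero {u : n → ℝ} {k : ℝ} (hu : M *ᵥ u = k • u) {j : n}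
    (hj : hM.eigenvalues j ≠ k) : (hM.eigenvectorBasis j).ofLp ⬝ᵥ u = 0 := by
  have h := hM.eigenvectorBasis_dotProduct_mulVec j u
  rw [hu, dotProduct_smul, smul_eq_mul] at h
  exact (mul_eq_zero.mp (by linarith : (hM.eigenvalues j - k) * _ = 0)).resolve_left
    (sub_ne_zero.mpr hj)

theorem mulVec_eq_smul_of_dotProduct_mulVec_eq {θ : ℝ} {z : n → ℝ}
    (hz : ∀ j, hM.eigenvalues j ≤ θ ∨ (hM.eigenvectorBasis j).ofLp ⬝ᵥ z = 0)
    (heq : z ⬝ᵥ (M *ᵥ z) = θ * (z ⬝ᵥ z)) : M *ᵥ z = θ • z := by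
  set c : n → ℝ := fun j => (hM.eigenvectorBasis j).ofLp ⬝ᵥ z
  have hterm : ∀ j, 0 ≤ (θ - hM.eigenvalues j) * c j ^ 2 := fun j => by
    rcases hz j with h | h
    · exact mul_nonneg (sub_nonneg.mpr h) (sq_nonneg _)
    · simp [c, h]
  have hsum : ∑ j, (θ - hM.eigenvalues j) * c j ^ 2 = 0 := by
    simp only [hM.dotProduct_eq_sum_eigenvectorBasis z, eigenvectorBasis_dotProduct_mulVec,
      mul_sum] at heq
    rw [← sub_eq_zero.mpr heq.symm, ← sum_sub_distrib]
    exact sum_congr rfl fun j _ => by ring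
  have hfixed : ∀ j, hM.eigenvalues j * c j = θ * c j := fun j => by
    have := (sum_eq_zero_iff_of_nonneg fun j _ => hterm j).mp hsum j (mem_univ j)
    rcases mul_eq_zero.mp this with h | h
    · rw [sub_eq_zero.mp h]
    · rw [pow_eq_zero_iff two_ne_zero |>.mp h, mul_zero, mul_zero]
  rw [← sub_eq_zero, ← dotProduct_self_eq_zero, hM.dotProduct_eq_sum_eigenvectorBasis]
  refine sum_eq_zero fun j _ => ?_
  simp only [dotProduct_sub, dotProduct_smul, eigenvectorBasis_dotProduct_mulVec, smul_eq_mul]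
  rw [hfixed, sub_self, mul_zero]

end Matrix.IsHermitian

theorem Matrix.SecondEigLE.mulVec_eq_smul_of_dotProduct_mulVec_eq {n : Type*} [Fintype n]
    [DecidableEq n] {M : Matrix n n ℝ} {θ k : ℝ} (h : M.SecondEigLE θ) (hM : M.IsHermitian)
    {u z : n → ℝ} (hu : M *ᵥ u = k • u) (hu0 : u ≠ 0) (hθk : θ < k) (huz : u ⬝ᵥ z = 0)
    (heq : z ⬝ᵥ (M *ᵥ z) = θ * (z ⬝ᵥ z)) : M *ᵥ z = θ • z := by
  obtain ⟨i, hi⟩ := h hM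
  have hu_perp : ∀ j ≠ i, (hM.eigenvectorBasis j).ofLp ⬝ᵥ u = 0 := fun j hj =>
    hM.eigenvectorBasis_dotProduct_eq_zero hu ((hi j hj).trans_lt hθk).ne
  have hsingle : ∀ x, u ⬝ᵥ x =
      ((hM.eigenvectorBasis i).ofLp ⬝ᵥ u) * ((hM.eigenvectorBasis i).ofLp ⬝ᵥ x) := fun x => by
    rw [hM.dotProduct_eq_sum_eigenvectorBasis, sum_eq_single i
      (fun j _ hj => by rw [hu_perp j hj, zero_mul]) (by simp)]
  have hui : (hM.eigenvectorBasis i).ofLp ⬝ᵥ u ≠ 0 := fun h0 =>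
    hu0 (dotProduct_self_eq_zero.mp (by rw [hsingle, h0, zero_mul]))
  refine hM.mulVec_eq_smul_of_dotProduct_mulVec_eq (fun j => ?_) heq
  by_cases hj : j = i
  · exact .inr (hj ▸ (mul_eq_zero.mp ((hsingle z).symm.trans huz)).resolve_left hui)
  · exact .inl (hi j hj)

namespace SimpleGraph

variable {V : Type*} [Fintype V] [DecidableEq V] {G : SimpleGraph V} [DecidableRel G.Adj]

theorem adjMatrix_mulVec_indicator (A : Finset V) (y : V) :
    (G.adjMatrix ℝ *ᵥ fun x => if x ∈ A then 1 else 0) y = #{x ∈ G.neighborFinset y | x ∈ A} := by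
  rw [adjMatrix_mulVec_apply, sum_boole]

/-- If `A` induces an `a`-regular subgraph whose size attains the ratio bound
`(a - θ) |V| = (k - θ) |A|`, the partition `{A, Aᶜ}` is equitable. -/
theorem IsRegularOfDegree.card_neighborFinset_filter_mem_of_secondEigLE {k a : ℕ} {θ : ℝ}
    (hreg : G.IsRegularOfDegree k) (hEig : (G.adjMatrix ℝ).SecondEigLE θ) (hθk : θ < k)
    {A : Finset V} (hA : ∀ x ∈ A, #{z ∈ G.neighborFinset x | z ∈ A} = a)
    (htight : (a - θ) * Fintype.card V = (k - θ) * #A) {y : V} (hy : y ∉ A) :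
    (#{z ∈ G.neighborFinset y | z ∈ A} : ℝ) = a - θ := by
  set M := G.adjMatrix ℝ
  set n : ℝ := ↑(Fintype.card V)
  set m : ℝ := ↑(#A)
  set f : V → ℝ := fun x => if x ∈ A then 1 else 0
  set z : V → ℝ := n • f - m • 1
  have hMu : M *ᵥ 1 = (k : ℝ) • 1 := funext fun x => by
    simp [M, adjMatrix_mulVec_apply, hreg x]
  have hMf : ∀ x, (M *ᵥ f) x = #{z ∈ G.neighborFinset x | z ∈ A} := adjMatrix_mulVec_indicator A
  have huf : 1 ⬝ᵥ f = m := by rw [one_dotProduct, sum_boole, filter_mem_eq_inter, univ_inter]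
  have hff : f ⬝ᵥ f = m := by
    rw [← huf, dotProduct_comm]
    exact sum_congr rfl fun x _ => by by_cases hx : x ∈ A <;> simp [f, hx]
  have hfMf : f ⬝ᵥ (M *ᵥ f) = m * a := by
    simp only [dotProduct, f, ite_mul, one_mul, zero_mul, sum_ite_mem, univ_inter]
    rw [sum_congr rfl fun x hx => by rw [hMf, hA x hx], sum_const, nsmul_eq_mul]
  have huMf : 1 ⬝ᵥ (M *ᵥ f) = k * m := by
    rw [G.isSymm_adjMatrix.dotProduct_mulVec_comm, hMu, dotProduct_smul, dotProduct_comm, huf,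
      smul_eq_mul]
  have : Nonempty V := ⟨y⟩
  have hn : n ≠ 0 := Nat.cast_ne_zero.mpr Fintype.card_ne_zero
  have hMz : M *ᵥ z = θ • z := by
    refine hEig.mulVec_eq_smul_of_dotProduct_mulVec_eq (isHermitian_adjMatrix ℝ G) hMu
      one_ne_zero hθk ?_ ?_
    · simp only [z, dotProduct_sub, dotProduct_smul, huf, one_dotProduct_one, smul_eq_mul]
      ring
    · simp only [z, mulVec_sub, mulVec_smul, hMu, dotProduct_sub, sub_dotProduct, dotProduct_smul,
        smul_dotProduct, hfMf, huMf, hff, huf, one_dotProduct_one, dotProduct_comm f 1,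
        smul_eq_mul]
      linear_combination n * m * htight
  have hy' := congrFun hMz y
  simp only [z, mulVec_sub, mulVec_smul, hMu, Pi.sub_apply, Pi.smul_apply, hMf, f, hy,
    if_false, Pi.one_apply, smul_eq_mul] at hy'
  apply mul_left_cancel₀ hn
  linear_combination hy' - htight

end SimpleGraph

theorem regular_subgraph_complement_schlafli_general {V : Type*} [Fintype V] [DecidableEq V]
    (G : SimpleGraph V) [DecidableRel G.Adj]
    (hG : G.IsSRGWith 27 10 1 5)
    (hEig : Matrix.SecondEigLE (G.adjMatrix ℝ) 1)
    (t : ℕ) (A : Finset V) (hcard : A.card = 3 * (t + 1))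
    (hregA : ∀ x ∈ A, ((G.neighborFinset x).filter (· ∈ A)).card = t + 2) :
    ∀ y ∈ Aᶜ, ((G.neighborFinset y).filter (· ∈ Aᶜ)).card = 9 - t := by
  intro y hy
  have hin : (#{z ∈ G.neighborFinset y | z ∈ A} : ℝ) = (t + 2 : ℕ) - 1 :=
    hG.regular.card_neighborFinset_filter_mem_of_secondEigLE hEig (by norm_num) hregA
      (by rw [hG.card, hcard]; push_cast; ring) (mem_compl.mp hy)
  have hin' : #{z ∈ G.neighborFinset y | z ∈ A} = t + 1 := by
    rw [← Nat.cast_inj (R := ℝ), hin]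
    push_cast
    ring
  have hsplit := card_filter_add_card_filter_not (s := G.neighborFinset y) (· ∈ A)
  simp only [card_neighborFinset_eq_degree, hG.regular y, hin'] at hsplit
  simp only [mem_compl]
  omega

theorem regular_subgraph_complement_schlafli {V : Type*} [Fintype V] [DecidableEq V]
    (G : SimpleGraph V) [DecidableRel G.Adj]
    (hG : G.IsSRGWith 27 10 1 5)
    (hEig : Matrix.SecondEigLE (G.adjMatrix ℝ) 1)
    (t : ℕ) (ht : t ≤ 7) (A : Finset V) (hcard : A.card = 3 * (t + 1))
    (hregA : ∀ x ∈ A, ((G.neighborFinset x).filter (· ∈ A)).card = t + 2) :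
    ∀ y ∈ Aᶜ, ((G.neighborFinset y).filter (· ∈ Aᶜ)).card = 9 - t :=
  regular_subgraph_complement_schlafli_general G hG hEig t A hcard hregA
end
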